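/- arXiv:1304.1648 — 3 statements merged into one kernel-verified Lean document; each statement's English description precedes it below -/
import Mathlib

section
/- Let k be a real number, u, d : [t0, ∞) → ℝ with u continuously differentiable and d continuous, and suppose |u(t)| ≤ B and |u'(t)| ≤ B and |d(t)| ≤ Δ for all t. Let y solve y' = k·y + u(t) + d(t). Let T, ε ≥ 0 with T > √ε. If |y(t)| ≤ ε for all t ∈ [t0, t0+T], then |u(t)| ≤ √ε·(1 + e^{|k|√ε} + 2B) + Δ for all t ∈ [t0, t0+T]. -/
/-- Small-output-implies-small-input lemma for the scalar ODE `y' = k y + u + d`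
(Lemma 2 in the paper): if `|u|, |u'| ≤ B`, `|d| ≤ Δ`, and `|y| ≤ ε` on `[t0, t0+T]`
with `T > √ε`, then `|u(t)| ≤ √ε (1 + e^{|k|√ε} + 2B) + Δ` on `[t0, t0+T]`. -/
theorem stmt_0
    (k t0 T ε B Δ : ℝ) (u u' d y : ℝ → ℝ)
    (hu : ∀ t, t0 ≤ t → HasDerivAt u (u' t) t)
    (hu'cont : ContinuousOn u' (Set.Ici t0))
    (hd : ContinuousOn d (Set.Ici t0))
    (huB : ∀ t, t0 ≤ t → |u t| ≤ B)
    (hu'B : ∀ t, t0 ≤ t → |u' t| ≤ B)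
    (hdΔ : ∀ t, t0 ≤ t → |d t| ≤ Δ)
    (hy : ∀ t, t0 ≤ t → HasDerivAt y (k * y t + u t + d t) t)
    (hT : 0 ≤ T) (hε : 0 ≤ ε) (hTε : Real.sqrt ε < T)
    (hybnd : ∀ t ∈ Set.Icc t0 (t0 + T), |y t| ≤ ε) :
    ∀ t ∈ Set.Icc t0 (t0 + T),
      |u t| ≤ Real.sqrt ε * (1 + Real.exp (|k| * Real.sqrt ε) + 2 * B) + Δ := by
  have hB : 0 ≤ B := le_trans (abs_nonneg _) (huB t0 le_rfl)
  -- key estimate for any interval length L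
  have key : ∀ t ∈ Set.Icc t0 (t0 + T), ∀ L, 0 < L → L ≤ T →
      |u t| ≤ 2 * ε / L + |k| * ε + Δ + B * L := by
    rintro t ⟨ht0, htT⟩ L hL hLT
    set a := min t (t0 + T - L) with ha
    have ha0 : t0 ≤ a := le_min ht0 (by linarith)
    have haL : a + L ≤ t0 + T := by
      have := min_le_right t (t0 + T - L); linarith
    have hta : a ≤ t := min_le_left _ _
    have htaL : t ≤ a + L := by
      rcases le_total t (t0 + T - L) with h' | h'
      · have : a = t := min_eq_left h'; linarith
      · have : a = t0 + T - L := min_eq_right h'; linarith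
    have hab : a < a + L := by linarith
    -- MVT for y on [a, a+L]
    obtain ⟨c, hc, hcslope⟩ := exists_hasDerivAt_eq_slope y
        (fun x => k * y x + u x + d x) hab
        (fun x hx => ((hy x (le_trans ha0 hx.1)).continuousAt).continuousWithinAt)
        (fun x hx => hy x (le_trans ha0 hx.1.le))
    have hc1 : a ≤ c := hc.1.le
    have hc2 : c ≤ a + L := hc.2.le
    have hct0 : t0 ≤ c := le_trans ha0 hc1
    have hcT : c ≤ t0 + T := le_trans hc2 haL
    have hyc : |y c| ≤ ε := hybnd c ⟨hct0, hcT⟩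
    have hy1 : |y (a + L)| ≤ ε := hybnd _ ⟨by linarith, haL⟩
    have hy2 : |y a| ≤ ε := hybnd a ⟨ha0, by linarith⟩
    have hslope : |y (a + L) - y a| ≤ 2 * ε := by
      calc |y (a + L) - y a| ≤ |y (a + L)| + |y a| := abs_sub _ _
        _ ≤ 2 * ε := by linarith
    have hLne : a + L - a = L := by ring
    rw [hLne] at hcslope
    have huc : |u c| ≤ 2 * ε / L + |k| * ε + Δ := by
      have heq : u c = (y (a + L) - y a) / L - k * y c - d c := by linarith
      have h1 : |(y (a + L) - y a) / L| ≤ 2 * ε / L := by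
        rw [abs_div, abs_of_pos hL]
        exact div_le_div_of_nonneg_right hslope hL.le
      have h2 : |k * y c| ≤ |k| * ε := by
        rw [abs_mul]
        exact mul_le_mul_of_nonneg_left hyc (abs_nonneg _)
      have h3 : |d c| ≤ Δ := hdΔ c hct0
      calc |u c| = |(y (a + L) - y a) / L - k * y c - d c| := by rw [heq]
        _ ≤ |(y (a + L) - y a) / L| + |k * y c| + |d c| := by
          exact (abs_sub _ _).trans (by gcongr; exact abs_sub _ _)
        _ ≤ 2 * ε / L + |k| * ε + Δ := by linarith
    -- Lipschitz bound on u
    have hlip : |u t - u c| ≤ B * L := by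
      have := Convex.norm_image_sub_le_of_norm_hasDerivWithin_le
        (f := u) (f' := u') (C := B) (s := Set.Ici t0)
        (fun x hx => (hu x hx).hasDerivWithinAt)
        (fun x hx => by rw [Real.norm_eq_abs]; exact hu'B x hx)
        (convex_Ici t0) (Set.mem_Ici.2 hct0) (Set.mem_Ici.2 ht0)
      rw [Real.norm_eq_abs, Real.norm_eq_abs] at this
      have htc : |t - c| ≤ L := by
        rw [abs_le]; constructor <;> linarith
      calc |u t - u c| ≤ B * |t - c| := this
        _ ≤ B * L := mul_le_mul_of_nonneg_left htc hB
    calc |u t| = |u c + (u t - u c)| := by ring_nf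
      _ ≤ |u c| + |u t - u c| := abs_add_le _ _
      _ ≤ 2 * ε / L + |k| * ε + Δ + B * L := by linarith
  intro t ht
  rcases eq_or_lt_of_le (Real.sqrt_nonneg ε) with hs0 | hs0
  · -- √ε = 0, hence ε = 0
    have hε0 : ε = 0 := by
      have := Real.sq_sqrt hε
      rw [← hs0] at this; nlinarith
    rw [← hs0]
    simp only [zero_mul, zero_add]
    have hT0 : 0 < T := by rw [← hs0] at hTε; exact hTε
    refine le_of_forall_pos_le_add ?_
    intro δ hδ
    have hB1 : (0:ℝ) < B + 1 := by linarith
    set L := min T (δ / (B + 1)) with hLdef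
    have hL0 : 0 < L := lt_min hT0 (div_pos hδ hB1)
    have hLT : L ≤ T := min_le_left _ _
    have h := key t ht L hL0 hLT
    rw [hε0] at h
    have hBL : B * L ≤ δ := by
      have h1 : L ≤ δ / (B + 1) := min_le_right _ _
      have h2 : B * L ≤ B * (δ / (B + 1)) := mul_le_mul_of_nonneg_left h1 hB
      have h3 : B * (δ / (B + 1)) ≤ δ := by
        rw [mul_div_assoc', div_le_iff₀ hB1]; nlinarith
      linarith
    have : 2 * 0 / L = 0 := by simp
    rw [this] at h
    linarith
  · -- √ε > 0
    set s := Real.sqrt ε with hsdef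
    have hss : s * s = ε := Real.mul_self_sqrt hε
    have h := key t ht s hs0 hTε.le
    have hdiv : 2 * ε / s = 2 * s := by
      rw [← hss]; field_simp
    rw [hdiv] at h
    have hexp : |k| * s + 1 ≤ Real.exp (|k| * s) := Real.add_one_le_exp _
    have hkey : s * (|k| * s + 1) ≤ s * Real.exp (|k| * s) :=
      mul_le_mul_of_nonneg_left hexp hs0.le
    have hring : s * (|k| * s + 1) = |k| * ε + s := by rw [← hss]; ring
    nlinarith [mul_nonneg hB hs0.le]
end

section
/- Under the same hypotheses, if |y(t)| ≤ ε on [t0, t0+T] and L ∈ (0, T], then for all t ∈ [t0+L, t0+T], |u(t)| ≤ Δ + L·B + ε·(1 + e^{kL})/(L·min{1, e^{kL}}). -/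
/-!
On `[t - L, t]` the function `τ ↦ e^{-kτ} y(τ)` has derivative `e^{-kτ} (u + d)(τ)`, so the mean
value theorem gives `τ'` with `y(t) - e^{kL} y(t - L) = L e^{k(t-τ')} (u + d)(τ')`. Since
`e^{k(t-τ')} ≥ min{1, e^{kL}}`, this bounds `|u(τ') + d(τ')|` by `ε (1 + e^{kL}) / (L min{1, e^{kL}})`,
and `|u(t)| ≤ |u(t) - u(τ')| + |u(τ') + d(τ')| + |d(τ')|` with `|u(t) - u(τ')| ≤ L B`.
-/

open Set Real

lemma min_one_exp_mul_le_exp_mul {k L s : ℝ} (hs₀ : 0 ≤ s) (hsL : s ≤ L) :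
    min 1 (exp (k * L)) ≤ exp (k * s) := by
  rcases le_or_gt 0 k with hk | hk
  · exact (min_le_left _ _).trans (one_le_exp (mul_nonneg hk hs₀))
  · exact (min_le_right _ _).trans (exp_le_exp.mpr (by nlinarith))

lemma exists_sub_exp_mul_eq_of_hasDerivAt {k a b : ℝ} {y f : ℝ → ℝ} (hab : a < b)
    (hy : ∀ τ ∈ Icc a b, HasDerivAt y (k * y τ + f τ) τ) :
    ∃ τ ∈ Ioo a b, y b - exp (k * (b - a)) * y a = (b - a) * exp (k * (b - τ)) * f τ := by
  have hg : ∀ τ ∈ Icc a b,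
      HasDerivAt (fun τ ↦ exp (-k * τ) * y τ) (exp (-k * τ) * f τ) τ := by
    intro τ hτ
    have hexp : HasDerivAt (fun τ ↦ exp (-k * τ)) (exp (-k * τ) * -k) τ := by
      simpa using ((hasDerivAt_id τ).const_mul (-k)).exp
    exact (hexp.mul (hy τ hτ)).congr_deriv (by ring)
  obtain ⟨τ, hτ, hslope⟩ := exists_hasDerivAt_eq_slope (fun τ ↦ exp (-k * τ) * y τ)
    (fun τ ↦ exp (-k * τ) * f τ) hab
    (fun τ hτ ↦ (hg τ hτ).continuousAt.continuousWithinAt)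
    (fun τ hτ ↦ hg τ (Ioo_subset_Icc_self hτ))
  refine ⟨τ, hτ, ?_⟩
  rw [eq_div_iff (sub_ne_zero.mpr hab.ne')] at hslope
  have hexp_sub : ∀ c, exp (k * (b - c)) = exp (k * b) * exp (-k * c) := fun c ↦ by
    rw [← exp_add]; ring_nf
  have hexp_b : exp (k * b) * exp (-k * b) = 1 := by rw [← hexp_sub, sub_self, mul_zero, exp_zero]
  rw [hexp_sub, hexp_sub]
  linear_combination (-exp (k * b)) * hslope - y b * hexp_b

lemma exists_abs_le_of_hasDerivAt_of_abs_le {k a b ε : ℝ} {y f : ℝ → ℝ} (hab : a < b)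
    (hy : ∀ τ ∈ Icc a b, HasDerivAt y (k * y τ + f τ) τ) (hε : ∀ τ ∈ Icc a b, |y τ| ≤ ε) :
    ∃ τ ∈ Ioo a b,
      |f τ| ≤ ε * (1 + exp (k * (b - a))) / ((b - a) * min 1 (exp (k * (b - a)))) := by
  obtain ⟨τ, hτ, hid⟩ := exists_sub_exp_mul_eq_of_hasDerivAt hab hy
  refine ⟨τ, hτ, ?_⟩
  have hya := hε a (left_mem_Icc.mpr hab.le)
  have hyb := hε b (right_mem_Icc.mpr hab.le)
  have hm : 0 < (b - a) * min 1 (exp (k * (b - a))) :=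
    mul_pos (sub_pos.mpr hab) (lt_min one_pos (exp_pos _))
  have hmin : min 1 (exp (k * (b - a))) ≤ exp (k * (b - τ)) :=
    min_one_exp_mul_le_exp_mul (by linarith [hτ.2]) (by linarith [hτ.1])
  have hsum : (b - a) * exp (k * (b - τ)) * |f τ| ≤ ε * (1 + exp (k * (b - a))) := by
    calc (b - a) * exp (k * (b - τ)) * |f τ| = |y b - exp (k * (b - a)) * y a| := by
          rw [hid, abs_mul, abs_of_pos (mul_pos (sub_pos.mpr hab) (exp_pos _))]
      _ ≤ |y b| + exp (k * (b - a)) * |y a| :=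
          (abs_sub _ _).trans_eq (by rw [abs_mul, abs_of_pos (exp_pos _)])
      _ ≤ ε * (1 + exp (k * (b - a))) := by nlinarith [exp_pos (k * (b - a))]
  rw [le_div_iff₀ hm]
  calc |f τ| * ((b - a) * min 1 (exp (k * (b - a))))
      ≤ (b - a) * exp (k * (b - τ)) * |f τ| := by
        nlinarith [mul_le_mul_of_nonneg_left hmin
          (mul_nonneg (sub_pos.mpr hab).le (abs_nonneg (f τ)))]
    _ ≤ _ := hsum

theorem stmt_2_general
    (k t0 T L ε B Δ : ℝ) (u u' d y : ℝ → ℝ)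
    (hu : ∀ t, t0 ≤ t → HasDerivAt u (u' t) t)
    (hu'B : ∀ t, t0 ≤ t → |u' t| ≤ B)
    (hdΔ : ∀ t, t0 ≤ t → |d t| ≤ Δ)
    (hy : ∀ t, t0 ≤ t → HasDerivAt y (k * y t + u t + d t) t)
    (hL : 0 < L)
    (hybnd : ∀ t ∈ Set.Icc t0 (t0 + T), |y t| ≤ ε) :
    ∀ t ∈ Set.Icc (t0 + L) (t0 + T),
      |u t| ≤ Δ + L * B
        + ε * (1 + Real.exp (k * L)) / (L * min 1 (Real.exp (k * L))) := by
  rintro t ⟨ht₁, ht₂⟩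
  have hmem : ∀ τ ∈ Icc (t - L) t, t0 ≤ τ := fun τ hτ ↦ by linarith [hτ.1]
  obtain ⟨τ, hτ, hf⟩ := exists_abs_le_of_hasDerivAt_of_abs_le (f := u + d) (sub_lt_self t hL)
    (fun τ hτ ↦ by simpa [add_assoc] using hy τ (hmem τ hτ))
    (fun τ hτ ↦ hybnd τ ⟨hmem τ hτ, hτ.2.trans ht₂⟩)
  rw [sub_sub_cancel] at hf
  have hτt0 : t0 ≤ τ := hmem τ (Ioo_subset_Icc_self hτ)
  have hlip : |u t - u τ| ≤ B * (t - τ) :=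
    norm_image_sub_le_of_norm_deriv_le_segment'
      (fun x hx ↦ (hu x (hτt0.trans hx.1)).hasDerivWithinAt)
      (fun x hx ↦ hu'B x (hτt0.trans hx.1)) t (right_mem_Icc.mpr hτ.2.le)
  have hBL : B * (t - τ) ≤ L * B := by
    nlinarith [(abs_nonneg _).trans (hu'B t (by linarith)), hτ.1]
  calc |u t| = |(u t - u τ) + (u + d) τ - d τ| := by rw [Pi.add_apply]; ring_nf
    _ ≤ |u t - u τ| + |(u + d) τ| + |d τ| :=
        (abs_sub _ _).trans (by gcongr; exact abs_add_le _ _)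
    _ ≤ _ := by linarith [hdΔ τ hτt0]

/-- Intermediate estimate in the small-gain lemma for `y' = k y + u + d`: if
`|y| ≤ ε` on `[t0, t0+T]` and `L ∈ (0, T]`, then for all `t ∈ [t0+L, t0+T]`,
`|u(t)| ≤ Δ + L B + ε (1 + e^{kL}) / (L min{1, e^{kL}})`. -/
theorem stmt_2
    (k t0 T L ε B Δ : ℝ) (u u' d y : ℝ → ℝ)
    (hu : ∀ t, t0 ≤ t → HasDerivAt u (u' t) t)
    (hu'cont : ContinuousOn u' (Set.Ici t0))
    (hd : ContinuousOn d (Set.Ici t0))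
    (huB : ∀ t, t0 ≤ t → |u t| ≤ B)
    (hu'B : ∀ t, t0 ≤ t → |u' t| ≤ B)
    (hdΔ : ∀ t, t0 ≤ t → |d t| ≤ Δ)
    (hy : ∀ t, t0 ≤ t → HasDerivAt y (k * y t + u t + d t) t)
    (hL : 0 < L) (hLT : L ≤ T)
    (hybnd : ∀ t ∈ Set.Icc t0 (t0 + T), |y t| ≤ ε) :
    ∀ t ∈ Set.Icc (t0 + L) (t0 + T),
      |u t| ≤ Δ + L * B
        + ε * (1 + Real.exp (k * L)) / (L * min 1 (Real.exp (k * L))) :=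
  stmt_2_general k t0 T L ε B Δ u u' d y hu hu'B hdΔ hy hL hybnd
end

section
/- Let τ : ℝ → ℝ be continuous with τ(x) > 0 for all x, let w∞ : ℝ → ℝ be continuous, and let x : [t0, ∞) → ℝ be continuous and T-periodic. Consider q' = −q/τ(x(t)) + w∞(x(t))/τ(x(t)). Then there is a unique initial condition q0 = (1 − e^{−∫_{t0}^{t0+T} dt/τ(x(t))})^{−1} · ∫_{t0}^{t0+T} e^{−∫_{z}^{t0+T} ds/τ(x(s))} · (w∞(x(z))/τ(x(z))) dz for which the solution q(t) = e^{−∫_{t0}^{t} ds/τ(x(s))} q0 + ∫_{t0}^{t} e^{−∫_{z}^{t} ds/τ(x(s))} (w∞(x(z))/τ(x(z))) dz is T-periodic, and every other solution converges to this periodic solution as t → ∞. -/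
/-!
Write the equation as `q' = -a q + b` with `a = 1/τ∘x > 0` and `b = (w∞/τ)∘x`, both continuous
and `T`-periodic. Multiplying by the integrating factor `exp (∫_{t₀}^t a)` gives the
variation-of-constants formula, and subtracting two instances of it shows that the difference of
two solutions is `exp (-∫_{t₀}^t a)` times its value at `t₀`. Since `t ↦ q (t + T)` is again a
solution, `q` is `T`-periodic as soon as `q (t₀ + T) = q t₀`, which by the formula is the affine
fixed-point equation `q t₀ = e^{-I} q t₀ + J` with multiplier `e^{-I} < 1`. Finally `∫_{t₀}^t a → ∞`
because `a` is positive and periodic, so any two solutions converge to each other.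
-/

open Real Filter intervalIntegral Function

namespace LinearODE

variable {a b p q : ℝ → ℝ}

theorem hasDerivAt_mul_exp_integral (ha : Continuous a)
    (hq : ∀ t, HasDerivAt q (-a t * q t + b t) t) (t₀ t : ℝ) :
    HasDerivAt (fun u => q u * exp (∫ s in t₀..u, a s)) (b t * exp (∫ s in t₀..t, a s)) t :=
  ((hq t).mul (ha.integral_hasStrictDerivAt t₀ t).hasDerivAt.exp).congr_deriv (by ring)

theorem eq_exp_mul_add_integral (ha : Continuous a) (hb : Continuous b)
    (hq : ∀ t, HasDerivAt q (-a t * q t + b t) t) (t₀ t : ℝ) :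
    q t = exp (-∫ s in t₀..t, a s) * q t₀ +
      ∫ z in t₀..t, exp (-∫ s in z..t, a s) * b z := by
  set A : ℝ → ℝ := fun u => ∫ s in t₀..u, a s
  have hA : Continuous A := continuous_primitive (fun _ _ => ha.intervalIntegrable _ _) t₀
  have hFTC : q t * exp (A t) - q t₀ = ∫ z in t₀..t, b z * exp (A z) := by
    rw [integral_eq_sub_of_hasDerivAt (fun u _ => hasDerivAt_mul_exp_integral ha hq t₀ u)
      ((hb.mul hA.rexp).intervalIntegrable _ _)]
    simp [A]
  have hkernel : ∀ z, exp (-∫ s in z..t, a s) * b z = exp (-A t) * (b z * exp (A z)) := by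
    intro z
    rw [← integral_interval_sub_left (ha.intervalIntegrable t₀ t) (ha.intervalIntegrable t₀ z),
      neg_sub, sub_eq_neg_add, exp_add]
    ring
  have hcancel : exp (-∫ s in t₀..t, a s) * exp (∫ s in t₀..t, a s) = 1 := by
    rw [← exp_add, neg_add_cancel, exp_zero]
  simp_rw [hkernel, integral_const_mul, ← hFTC]
  linear_combination (-q t) * hcancel

theorem sub_eq_exp_mul (ha : Continuous a) (hb : Continuous b)
    (hp : ∀ t, HasDerivAt p (-a t * p t + b t) t) (hq : ∀ t, HasDerivAt q (-a t * q t + b t) t)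
    (t₀ t : ℝ) :
    p t - q t = exp (-∫ s in t₀..t, a s) * (p t₀ - q t₀) := by
  linear_combination eq_exp_mul_add_integral ha hb hp t₀ t - eq_exp_mul_add_integral ha hb hq t₀ t

section Periodic

variable {T : ℝ}

theorem hasDerivAt_comp_add_period (haT : Periodic a T) (hbT : Periodic b T)
    (hq : ∀ t, HasDerivAt q (-a t * q t + b t) t) (t : ℝ) :
    HasDerivAt (fun u => q (u + T)) (-a t * q (t + T) + b t) t := by
  simpa only [haT t, hbT t] using (hq (t + T)).comp_add_const t T

theorem periodic_of_apply_add_eq (ha : Continuous a) (hb : Continuous b) (haT : Periodic a T)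
    (hbT : Periodic b T) (hq : ∀ t, HasDerivAt q (-a t * q t + b t) t) {t₀ : ℝ}
    (h : q (t₀ + T) = q t₀) :
    Periodic q T := by
  intro t
  have := sub_eq_exp_mul ha hb (hasDerivAt_comp_add_period haT hbT hq) hq t₀ t
  rwa [h, sub_self, mul_zero, sub_eq_zero] at this

theorem apply_add_eq_iff (ha : Continuous a) (hb : Continuous b) (hapos : ∀ t, 0 < a t)
    (hT : 0 < T) (hq : ∀ t, HasDerivAt q (-a t * q t + b t) t) (t₀ : ℝ) :
    q (t₀ + T) = q t₀ ↔
      q t₀ = (1 - exp (-∫ s in t₀..t₀ + T, a s))⁻¹ *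
        ∫ z in t₀..t₀ + T, exp (-∫ s in z..t₀ + T, a s) * b z := by
  have hI : 0 < ∫ s in t₀..t₀ + T, a s :=
    intervalIntegral_pos_of_pos (ha.intervalIntegrable _ _) hapos (by linarith)
  have hden : 1 - exp (-∫ s in t₀..t₀ + T, a s) ≠ 0 :=
    (sub_pos.mpr (Real.exp_lt_one_iff.mpr (neg_neg_of_pos hI))).ne'
  rw [eq_exp_mul_add_integral ha hb hq t₀ (t₀ + T), eq_inv_mul_iff_mul_eq₀ hden]
  constructor <;> intro h <;> linarith

theorem tendsto_integral_atTop (ha : Continuous a) (haT : Periodic a T) (hapos : ∀ t, 0 < a t)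
    (hT : 0 < T) (t₀ : ℝ) :
    Tendsto (fun t => ∫ s in t₀..t, a s) atTop atTop := by
  have h₀ := haT.tendsto_atTop_intervalIntegral_of_pos' (ha.intervalIntegrable 0 T) hapos hT
  refine (h₀.atTop_add (tendsto_const_nhds (x := -∫ s in (0 : ℝ)..t₀, a s))).congr fun t => ?_
  rw [← sub_eq_add_neg, integral_interval_sub_left (ha.intervalIntegrable _ _)
    (ha.intervalIntegrable _ _)]

theorem tendsto_sub_nhds_zero (ha : Continuous a) (hb : Continuous b) (haT : Periodic a T)
    (hapos : ∀ t, 0 < a t) (hT : 0 < T) (hp : ∀ t, HasDerivAt p (-a t * p t + b t) t)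
    (hq : ∀ t, HasDerivAt q (-a t * q t + b t) t) :
    Tendsto (fun t => p t - q t) atTop (nhds 0) := by
  have hexp : Tendsto (fun t => exp (-∫ s in (0 : ℝ)..t, a s)) atTop (nhds 0) :=
    tendsto_exp_atBot.comp (tendsto_neg_atTop_atBot.comp (tendsto_integral_atTop ha haT hapos hT 0))
  simpa [← sub_eq_exp_mul ha hb hp hq 0] using hexp.mul_const (p 0 - q 0)

end Periodic

end LinearODE

open LinearODE

/-- Elimination of the recovery variable: for `q' = −q/τ(x(t)) + wInf(x(t))/τ(x(t))`
with `τ > 0` continuous, `wInf` continuous, and `x` continuous `T`-periodic, every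
solution satisfies the closed-form variation-of-constants formula; the solution
is `T`-periodic iff its initial condition equals the explicit `q0`, and every
solution converges to the periodic one as `t → ∞`. -/
theorem stmt_9
    (τ wInf : ℝ → ℝ) (x : ℝ → ℝ) (t0 T : ℝ) (hT : 0 < T)
    (hτ : Continuous τ) (hτpos : ∀ s, 0 < τ s)
    (hw : Continuous wInf) (hx : Continuous x)
    (hxper : ∀ t, x (t + T) = x t) :
    let q0 : ℝ := (1 - Real.exp (-∫ t in t0..(t0 + T), 1 / τ (x t)))⁻¹ *
      ∫ z in t0..(t0 + T),
        Real.exp (-∫ s in z..(t0 + T), 1 / τ (x s)) * (wInf (x z) / τ (x z))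
    -- closed-form solution formula
    (∀ q : ℝ → ℝ, (∀ t, HasDerivAt q (-q t / τ (x t) + wInf (x t) / τ (x t)) t) →
      ∀ t, t0 ≤ t →
        q t = Real.exp (-∫ s in t0..t, 1 / τ (x s)) * q t0 +
          ∫ z in t0..t,
            Real.exp (-∫ s in z..t, 1 / τ (x s)) * (wInf (x z) / τ (x z))) ∧
    -- q0 is the unique initial condition yielding a T-periodic solution
    (∀ q : ℝ → ℝ, (∀ t, HasDerivAt q (-q t / τ (x t) + wInf (x t) / τ (x t)) t) →
      ((∀ t, t0 ≤ t → q (t + T) = q t) ↔ q t0 = q0)) ∧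
    -- every solution converges to the periodic one
    (∀ q p : ℝ → ℝ,
      (∀ t, HasDerivAt q (-q t / τ (x t) + wInf (x t) / τ (x t)) t) →
      (∀ t, HasDerivAt p (-p t / τ (x t) + wInf (x t) / τ (x t)) t) →
      q t0 = q0 →
      Filter.Tendsto (fun t => p t - q t) Filter.atTop (nhds 0)) := by
  intro q0
  have hτx : Continuous fun t => τ (x t) := hτ.comp hx
  have ha : Continuous fun t => 1 / τ (x t) := continuous_const.div hτx fun t => (hτpos _).ne'
  have hb : Continuous fun t => wInf (x t) / τ (x t) :=
    (hw.comp hx).div hτx fun t => (hτpos _).ne'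
  have hapos : ∀ t, 0 < 1 / τ (x t) := fun t => one_div_pos.mpr (hτpos _)
  have haT : Periodic (fun t => 1 / τ (x t)) T := fun t => by simp only [hxper]
  have hbT : Periodic (fun t => wInf (x t) / τ (x t)) T := fun t => by simp only [hxper]
  have hlin : ∀ q : ℝ → ℝ, (∀ t, HasDerivAt q (-q t / τ (x t) + wInf (x t) / τ (x t)) t) →
      ∀ t, HasDerivAt q (-(1 / τ (x t)) * q t + wInf (x t) / τ (x t)) t :=
    fun q hq t => (hq t).congr_deriv (by ring)
  refine ⟨fun q hq t _ => eq_exp_mul_add_integral ha hb (hlin q hq) t0 t,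
    fun q hq => ⟨fun h => ?_, fun h t _ => ?_⟩,
    fun q p hq hp _ => tendsto_sub_nhds_zero ha hb haT hapos hT (hlin p hp) (hlin q hq)⟩
  · exact (apply_add_eq_iff ha hb hapos hT (hlin q hq) t0).mp (h t0 le_rfl)
  · exact periodic_of_apply_add_eq ha hb haT hbT (hlin q hq)
      ((apply_add_eq_iff ha hb hapos hT (hlin q hq) t0).mpr h) t
end
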